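/- arXiv:1406.1637 — 3 statements merged into one kernel-verified Lean document; each statement's English description precedes it below -/
import Mathlib

section
/- Let ∅ ≠ G ⊊ ℝⁿ be an open set and let f ∈ C_c(G) be a continuous function with compact support in G. Then the local Hardy–Littlewood maximal function M_G f is continuous on G. -/
open MeasureTheory Metric
open scoped ENNReal

/-- The local Hardy–Littlewood maximal function
`M_G f(x) = sup_{0 < r < dist(x,∂G)} ⨍_{B(x,r)} |f|`. -/
noncomputable def localMax {n : ℕ} (G : Set (EuclideanSpace ℝ (Fin n)))
    (f : EuclideanSpace ℝ (Fin n) → ℝ) (x : EuclideanSpace ℝ (Fin n)) : ℝ :=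
  ⨆ r : {r : ℝ // 0 < r ∧ r < Metric.infDist x (frontier G)},
    ⨍ y in Metric.ball x (r : ℝ), |f y|

/-!
Substituting `y = x + r • z` writes `⨍_{B(x,r)} |f|` as `A(x, r) = ⨍_{B(0,1)} |f(x + r • z)|`,
which is jointly continuous in `(x, r)` because `f` is continuous and the unit ball is relatively
compact. As `A(x, ·)` is continuous, the supremum over `0 < r < d(x) = dist(x, ∂G)` is the
maximum of `A(x, t • d(x))` over `t ∈ [0, 1]`, and a supremum of a jointly continuous function
over a compact parameter set depends continuously on the remaining variable. On the open set `G`,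
`d` is continuous and positive.
-/

open Set

theorem ContinuousOn.sSup_image_Ioo_eq {β : Type*} [ConditionallyCompleteLinearOrder β]
    [TopologicalSpace β] [OrderTopology β] {g : ℝ → β} {a b : ℝ} (hab : a < b)
    (hg : ContinuousOn g (Icc a b)) : sSup (g '' Ioo a b) = sSup (g '' Icc a b) := by
  have hlub : IsLUB (g '' Icc a b) (sSup (g '' Icc a b)) :=
    isLUB_csSup ((nonempty_Icc.2 hab.le).image g) (isCompact_Icc.image_of_continuousOn hg).bddAbove
  have hclosure : g '' Icc a b ⊆ closure (g '' Ioo a b) := by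
    rw [← closure_Ioo hab.ne] at hg ⊢
    exact hg.image_closure
  exact ((isLUB_iff_of_subset_of_subset_closure (image_mono Ioo_subset_Icc_self)
    hclosure).2 hlub).csSup_eq ((nonempty_Ioo.2 hab).image g)

theorem continuousOn_iSup_Ioo {X : Type*} [TopologicalSpace X] {φ : X → ℝ → ℝ}
    (hφ : Continuous ↿φ) {d : X → ℝ} (hd : Continuous d) :
    ContinuousOn (fun x => ⨆ r : {r : ℝ // 0 < r ∧ r < d x}, φ x r) {x | 0 < d x} := by
  have hrescale : ∀ x, 0 < d x →
      ⨆ r : {r : ℝ // 0 < r ∧ r < d x}, φ x r = sSup ((fun t => φ x (t * d x)) '' Icc 0 1) := by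
    intro x hx
    have hIcc : (· * d x) '' Icc 0 1 = Icc 0 (d x) := by
      rw [image_mul_right_Icc zero_le_one hx.le, zero_mul, one_mul]
    have hφx : Continuous (φ x) := hφ.comp (Continuous.prodMk_right x)
    refine (sSup_image' (s := Ioo 0 (d x)) (f := φ x)).symm.trans ?_
    rw [hφx.continuousOn.sSup_image_Ioo_eq hx, ← hIcc, ← image_comp]
    rfl
  refine ContinuousOn.congr (IsCompact.continuous_sSup isCompact_Icc ?_).continuousOn hrescale
  exact hφ.comp (continuous_fst.prodMk (continuous_snd.mul (hd.comp continuous_fst)))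

section Averages

variable {E F : Type*} [NormedAddCommGroup F] [NormedSpace ℝ F]

theorem continuous_setAverage_of_isCompact_closure {X : Type*} [TopologicalSpace X]
    [FirstCountableTopology X] [LocallyCompactSpace X] [TopologicalSpace E] [MeasurableSpace E]
    [OpensMeasurableSpace E] [SecondCountableTopologyEither E F] {μ : Measure E}
    [IsLocallyFiniteMeasure μ] {f : X → E → F} (hf : Continuous ↿f) {s : Set E}
    (hs : IsCompact (closure s)) : Continuous fun x => ⨍ y in s, f x y ∂μ := by
  have hrestrict : (μ.restrict s).restrict (closure s) = μ.restrict s := by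
    rw [Measure.restrict_restrict isClosed_closure.measurableSet, inter_eq_right.2 subset_closure]
  have hint := continuous_parametric_integral_of_continuous (μ := μ.restrict s) hf hs
  rw [hrestrict] at hint
  simp only [setAverage_eq]
  exact hint.const_smul (μ.real s)⁻¹

variable [NormedAddCommGroup E] [NormedSpace ℝ E] [FiniteDimensional ℝ E] [MeasurableSpace E]
  [BorelSpace E] (μ : Measure E) [μ.IsAddHaarMeasure]

theorem setAverage_ball_eq_setAverage_unitBall (g : E → F) (x : E) {r : ℝ} (hr : 0 < r) :
    ⨍ y in ball x r, g y ∂μ = ⨍ y in ball 0 1, g (x + r • y) ∂μ := by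
  have htranslate : ∫ y in ball (0 : E) r, g (x + y) ∂μ = ∫ y in ball x r, g y ∂μ := by
    have := (measurePreserving_add_left μ x).setIntegral_preimage_emb
      (MeasurableEquiv.addLeft x).measurableEmbedding g (ball x r)
    rwa [preimage_add_ball, sub_self] at this
  have hdilate := Measure.setIntegral_comp_smul_of_pos μ (fun y => g (x + y)) (ball (0 : E) 1) hr
  rw [smul_unitBall_of_pos hr, htranslate] at hdilate
  have hvol : μ.real (ball x r) = r ^ Module.finrank ℝ E * μ.real (ball 0 1) := by
    rw [measureReal_def, measureReal_def, Measure.addHaar_ball_of_pos μ x hr, ENNReal.toReal_mul,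
      ENNReal.toReal_ofReal (by positivity)]
  rw [setAverage_eq, setAverage_eq, hdilate, hvol, smul_smul, mul_inv, mul_comm]

end Averages

theorem localMax_continuousOn_general (n : ℕ) (G : Set (EuclideanSpace ℝ (Fin n)))
    (hG : IsOpen G)
    (f : EuclideanSpace ℝ (Fin n) → ℝ) (hf : Continuous f) :
    ContinuousOn (localMax G f) G := by
  rcases (frontier G).eq_empty_or_nonempty with hfr | hfr
  -- `infDist x ∅ = 0`, so every supremum defining `localMax G f` is empty and equals `0`
  · refine continuousOn_const (c := 0).congr fun x _ => ?_
    have : IsEmpty {r : ℝ // 0 < r ∧ r < infDist x (frontier G)} :=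
      ⟨fun ⟨r, hr0, hr⟩ => by rw [hfr, infDist_empty] at hr; linarith⟩
    exact Real.iSup_of_isEmpty _
  have hpos : G ⊆ {x | 0 < infDist x (frontier G)} := fun x hx =>
    (isClosed_frontier.notMem_iff_infDist_pos hfr).1 fun hxfr => (hG.frontier_eq ▸ hxfr).2 hx
  have hunit : localMax G f = fun x => ⨆ r : {r : ℝ // 0 < r ∧ r < infDist x (frontier G)},
      ⨍ y in ball 0 1, |f (x + (r : ℝ) • y)| :=
    funext fun x => iSup_congr fun r => setAverage_ball_eq_setAverage_unitBall volume _ x r.2.1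
  have hcont : Continuous fun p : EuclideanSpace ℝ (Fin n) × ℝ =>
      ⨍ y in ball 0 1, |f (p.1 + p.2 • y)| :=
    continuous_setAverage_of_isCompact_closure (by fun_prop) isBounded_ball.isCompact_closure
  rw [hunit]
  exact (continuousOn_iSup_Ioo (φ := fun x r => ⨍ y in ball 0 1, |f (x + r • y)|) hcont
    (continuous_infDist_pt _)).mono hpos

/-- **Lemma 2.1.** Let `∅ ≠ G ⊊ ℝⁿ` be an open set and `f ∈ C_c(G)`. Then
`M_G f` is continuous on `G`. -/
theorem localMax_continuousOn (n : ℕ) (G : Set (EuclideanSpace ℝ (Fin n)))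
    (hG : IsOpen G) (hne : G.Nonempty) (hGuniv : G ≠ Set.univ)
    (f : EuclideanSpace ℝ (Fin n) → ℝ) (hf : Continuous f)
    (hsupp : HasCompactSupport f) (hsuppG : tsupport f ⊆ G) :
    ContinuousOn (localMax G f) G :=
  localMax_continuousOn_general n G hG f hf
end

section
/- Let 0 < s < 1 and 1 < p < ∞. There is a constant C = C(n,s,p) > 0 such that for every closed cube Q ⊂ ℝⁿ with side length ℓ(Q) and every u ∈ L^p(Q), one has ∫_Q | u(x) − ⨍_{2^{-1}Q} u(y) dy |^p dx ≤ C ℓ(Q)^{sp} ∫_Q ∫_Q |u(x) − u(y)|^p / |x−y|^{n+sp} dy dx. -/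
/-!
Jensen's inequality gives `|u x - ⨍_{Q/2} u|^p ≤ |Q/2|⁻¹ ∫_{Q/2} |u x - u y|^p dy`. Enlarge the
inner domain to `Q` and insert the kernel using `|x - y| ≤ √n ℓ` on `Q`: this costs the factor
`(√n ℓ)^{n+sp}`, and since `|Q/2|⁻¹ = 2^n ℓ^{-n}` one is left with `2^n (√n)^{n+sp} ℓ^{sp}`.
-/
open MeasureTheory Metric
open scoped ENNReal

/-- The closed cube with center `c` and side length `ℓ`. -/
def closedCube {n : ℕ} (c : EuclideanSpace ℝ (Fin n)) (ℓ : ℝ) :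
    Set (EuclideanSpace ℝ (Fin n)) :=
  {x | ∀ i : Fin n, |x i - c i| ≤ ℓ / 2}

theorem le_mul_div_of_le {a d D : ℝ} (ha : 0 ≤ a) (hd : 0 ≤ d) (hdD : d ≤ D)
    (had : d = 0 → a = 0) : a ≤ D * (a / d) := by
  rcases hd.eq_or_lt with rfl | hd
  · simp [had rfl]
  · calc a = d * (a / d) := by field_simp
      _ ≤ D * (a / d) := by gcongr

theorem ofReal_abs_rpow_eq_enorm_rpow (t : ℝ) {p : ℝ} (hp : 0 ≤ p) :
    ENNReal.ofReal (|t| ^ p) = ‖t‖ₑ ^ p := by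
  rw [Real.enorm_eq_ofReal_abs, ENNReal.ofReal_rpow_of_nonneg (abs_nonneg t) hp]

section Kernel

variable {X : Type*} [MetricSpace X] [MeasurableSpace X] {μ : Measure X}

theorem lintegral_lintegral_enorm_sub_rpow_le {S : Set X} (hS : MeasurableSet S) {D p e : ℝ}
    (hD : ∀ x ∈ S, ∀ y ∈ S, dist x y ≤ D) (hp : 0 < p) (he : 0 ≤ e) (u : X → ℝ) :
    ∫⁻ x in S, ∫⁻ y in S, ‖u x - u y‖ₑ ^ p ∂μ ∂μ ≤
      ENNReal.ofReal (D ^ e) *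
        ∫⁻ x in S, ∫⁻ y in S, ENNReal.ofReal (|u x - u y| ^ p / dist x y ^ e) ∂μ ∂μ := by
  have hpointwise : ∀ x ∈ S, ∀ y ∈ S, ‖u x - u y‖ₑ ^ p ≤
      ENNReal.ofReal (D ^ e) * ENNReal.ofReal (|u x - u y| ^ p / dist x y ^ e) := by
    intro x hx y hy
    have hdxy := hD x hx y hy
    rw [← ofReal_abs_rpow_eq_enorm_rpow _ hp.le,
      ← ENNReal.ofReal_mul (Real.rpow_nonneg (dist_nonneg.trans hdxy) e)]
    refine ENNReal.ofReal_le_ofReal (le_mul_div_of_le (by positivity) (by positivity)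
      (by gcongr) fun h => ?_)
    rw [Real.rpow_eq_zero_iff_of_nonneg dist_nonneg, dist_eq_zero] at h
    rw [h.1, sub_self, abs_zero, Real.zero_rpow hp.ne']
  calc ∫⁻ x in S, ∫⁻ y in S, ‖u x - u y‖ₑ ^ p ∂μ ∂μ
      ≤ ∫⁻ x in S, ∫⁻ y in S,
          ENNReal.ofReal (D ^ e) * ENNReal.ofReal (|u x - u y| ^ p / dist x y ^ e) ∂μ ∂μ :=
        setLIntegral_mono' hS fun x hx => setLIntegral_mono' hS fun y hy => hpointwise x hx y hy
    _ = _ := by simp only [lintegral_const_mul' _ _ ENNReal.ofReal_ne_top]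

end Kernel

section Jensen

variable {α E : Type*} [MeasurableSpace α] {μ : Measure α}
  [NormedAddCommGroup E] [NormedSpace ℝ E] {f : α → E} {p : ℝ}

theorem enorm_average_rpow_le_laverage [IsFiniteMeasure μ] [NeZero μ]
    (hf : AEStronglyMeasurable f μ) (hp : 1 ≤ p) :
    ‖⨍ x, f x ∂μ‖ₑ ^ p ≤ ⨍⁻ x, ‖f x‖ₑ ^ p ∂μ := by
  rw [average_eq', laverage_eq']
  set ν := (μ Set.univ)⁻¹ • μ
  have hp0 : 0 < p := zero_lt_one.trans_le hp
  have hpq : eLpNorm f 1 ν ≤ eLpNorm f (ENNReal.ofReal p) ν :=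
    eLpNorm_le_eLpNorm_of_exponent_le (by simpa using hp) (hf.smul_measure _)
  rw [eLpNorm_one_eq_lintegral_enorm, eLpNorm_eq_lintegral_rpow_enorm_toReal
    (by simpa using hp0) ENNReal.ofReal_ne_top, ENNReal.toReal_ofReal hp0.le] at hpq
  calc ‖∫ x, f x ∂ν‖ₑ ^ p ≤ ((∫⁻ x, ‖f x‖ₑ ^ p ∂ν) ^ (1 / p)) ^ p := by
        gcongr; exact (enorm_integral_le_lintegral_enorm f).trans hpq
    _ = ∫⁻ x, ‖f x‖ₑ ^ p ∂ν := by
        rw [← ENNReal.rpow_mul, one_div_mul_cancel hp0.ne', ENNReal.rpow_one]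

theorem enorm_sub_average_rpow_le_laverage [CompleteSpace E] [IsFiniteMeasure μ] [NeZero μ]
    (hf : Integrable f μ) (hp : 1 ≤ p) (a : E) :
    ‖a - ⨍ x, f x ∂μ‖ₑ ^ p ≤ ⨍⁻ x, ‖a - f x‖ₑ ^ p ∂μ := by
  have hν : Integrable f ((μ Set.univ)⁻¹ • μ) := hf.smul_measure (by simp [NeZero.ne μ])
  have hsub : a - ⨍ x, f x ∂μ = ⨍ x, (a - f x) ∂μ := by
    rw [average_eq', average_eq', integral_sub (integrable_const a) hν, integral_const,
      probReal_univ, one_smul]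
  rw [hsub]
  exact enorm_average_rpow_le_laverage ((integrable_const a).sub hf).aestronglyMeasurable hp

theorem lintegral_enorm_sub_average_rpow_le [CompleteSpace E] [IsFiniteMeasure μ] [NeZero μ]
    (hf : Integrable f μ) (hp : 1 ≤ p) (ν : Measure α) :
    ∫⁻ x, ‖f x - ⨍ y, f y ∂μ‖ₑ ^ p ∂ν ≤
      (μ Set.univ)⁻¹ * ∫⁻ x, ∫⁻ y, ‖f x - f y‖ₑ ^ p ∂μ ∂ν := by
  rw [← lintegral_const_mul' _ _ (by simp [NeZero.ne μ])]
  exact lintegral_mono fun x => (enorm_sub_average_rpow_le_laverage hf hp (f x)).trans_eq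
    (by rw [laverage_eq', lintegral_smul_measure, smul_eq_mul])

end Jensen

section Cube

variable {n : ℕ}

theorem closedCube_eq_preimage (c : EuclideanSpace ℝ (Fin n)) (ℓ : ℝ) :
    closedCube c ℓ = (MeasurableEquiv.toLp 2 (Fin n → ℝ)).symm ⁻¹'
      Set.univ.pi fun i => Set.Icc (c i - ℓ / 2) (c i + ℓ / 2) := by
  ext x
  simp only [closedCube, Set.mem_ofPred_eq, Set.mem_preimage, Set.mem_univ_pi, Set.mem_Icc,
    abs_sub_le_iff]
  refine forall_congr' fun i => ?_
  change _ ↔ c i - ℓ / 2 ≤ x i ∧ x i ≤ c i + ℓ / 2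
  constructor <;> rintro ⟨h₁, h₂⟩ <;> constructor <;> linarith

theorem measurableSet_closedCube (c : EuclideanSpace ℝ (Fin n)) (ℓ : ℝ) :
    MeasurableSet (closedCube c ℓ) := by
  rw [closedCube_eq_preimage]
  exact (MeasurableEquiv.toLp 2 (Fin n → ℝ)).symm.measurable
    (MeasurableSet.univ_pi fun _ => measurableSet_Icc)

theorem volume_closedCube (c : EuclideanSpace ℝ (Fin n)) {ℓ : ℝ} (hℓ : 0 ≤ ℓ) :
    volume (closedCube c ℓ) = ENNReal.ofReal (ℓ ^ n) := by
  rw [closedCube_eq_preimage,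
    (EuclideanSpace.volume_preserving_symm_measurableEquiv_toLp (Fin n)).measure_preimage
      (MeasurableSet.univ_pi fun _ => measurableSet_Icc).nullMeasurableSet,
    volume_pi_pi]
  simp [Real.volume_Icc, ENNReal.ofReal_pow hℓ]

theorem closedCube_subset_closedCube (c : EuclideanSpace ℝ (Fin n)) {ℓ ℓ' : ℝ} (h : ℓ ≤ ℓ') :
    closedCube c ℓ ⊆ closedCube c ℓ' :=
  fun _ hx i => (hx i).trans (by linarith)

theorem dist_le_of_mem_closedCube {c x y : EuclideanSpace ℝ (Fin n)} {ℓ : ℝ} (hℓ : 0 ≤ ℓ)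
    (hx : x ∈ closedCube c ℓ) (hy : y ∈ closedCube c ℓ) :
    dist x y ≤ √n * ℓ := by
  have hcoord : ∀ i, dist (x i) (y i) ≤ ℓ := fun i => by
    rw [Real.dist_eq]
    have := abs_sub_le (x i) (c i) (y i)
    linarith [hx i, abs_sub_comm (y i) (c i) ▸ hy i]
  calc dist x y = √(∑ i, dist (x i) (y i) ^ 2) := EuclideanSpace.dist_eq x y
    _ ≤ √(∑ _i : Fin n, ℓ ^ 2) := by gcongr with i; exact hcoord i
    _ = √n * ℓ := by simp [Real.sqrt_sq hℓ]

theorem inv_volume_closedCube_half_mul (c : EuclideanSpace ℝ (Fin n)) {ℓ K e : ℝ} (hℓ : 0 < ℓ)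
    (hK : 0 ≤ K) :
    (volume (closedCube c (ℓ / 2)))⁻¹ * ENNReal.ofReal ((K * ℓ) ^ ((n : ℝ) + e)) =
      ENNReal.ofReal (2 ^ n * K ^ ((n : ℝ) + e) * ℓ ^ e) := by
  rw [volume_closedCube c (by positivity), ← ENNReal.ofReal_inv_of_pos (by positivity),
    ← ENNReal.ofReal_mul (by positivity), Real.mul_rpow hK hℓ.le, Real.rpow_add hℓ,
    Real.rpow_natCast, div_pow]
  field_simp

end Cube

theorem fractional_poincare_on_cube_general (n : ℕ) (s p : ℝ)
    (hs : 0 < s) (hp : 1 < p) :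
    ∃ C : ℝ, 0 < C ∧
      ∀ (c : EuclideanSpace ℝ (Fin n)) (ℓ : ℝ), 0 < ℓ →
        ∀ u : EuclideanSpace ℝ (Fin n) → ℝ,
          MemLp u (ENNReal.ofReal p) (volume.restrict (closedCube c ℓ)) →
          (∫⁻ x in closedCube c ℓ,
              ENNReal.ofReal (|u x - ⨍ y in closedCube c (ℓ / 2), u y| ^ p)) ≤
            ENNReal.ofReal (C * ℓ ^ (s * p)) *
              ∫⁻ x in closedCube c ℓ, ∫⁻ y in closedCube c ℓ,
                ENNReal.ofReal (|u x - u y| ^ p / dist x y ^ ((n : ℝ) + s * p)) := by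
  -- `√(n + 1)` instead of the diameter factor `√n` keeps `C` positive when `n = 0`.
  refine ⟨2 ^ n * √(n + 1) ^ ((n : ℝ) + s * p), by positivity, fun c ℓ hℓ u hu => ?_⟩
  set Q := closedCube c ℓ
  set Q' := closedCube c (ℓ / 2)
  set e := (n : ℝ) + s * p
  have hvolQ' : volume Q' = ENNReal.ofReal ((ℓ / 2) ^ n) := volume_closedCube c (by positivity)
  have : IsFiniteMeasure (volume.restrict Q') := isFiniteMeasure_restrict.2 (by simp [hvolQ'])
  have : NeZero (volume.restrict Q') := ⟨by simp [Measure.restrict_eq_zero, hvolQ', hℓ]⟩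
  have hQ'Q : Q' ⊆ Q := closedCube_subset_closedCube c (by linarith)
  have hu' : IntegrableOn u Q' :=
    (hu.mono_measure (Measure.restrict_mono hQ'Q le_rfl)).integrable (by simpa using hp.le)
  have hdiam : ∀ x ∈ Q, ∀ y ∈ Q, dist x y ≤ √(n + 1) * ℓ := fun x hx y hy =>
    (dist_le_of_mem_closedCube hℓ.le hx hy).trans (by gcongr; linarith)
  simp_rw [ofReal_abs_rpow_eq_enorm_rpow _ (zero_le_one.trans hp.le)]
  calc ∫⁻ x in Q, ‖u x - ⨍ y in Q', u y‖ₑ ^ p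
      ≤ (volume Q')⁻¹ * ∫⁻ x in Q, ∫⁻ y in Q', ‖u x - u y‖ₑ ^ p := by
        simpa using lintegral_enorm_sub_average_rpow_le hu' hp.le (volume.restrict Q)
    _ ≤ (volume Q')⁻¹ * ∫⁻ x in Q, ∫⁻ y in Q, ‖u x - u y‖ₑ ^ p := by gcongr
    _ ≤ (volume Q')⁻¹ * (ENNReal.ofReal ((√(n + 1) * ℓ) ^ e) *
          ∫⁻ x in Q, ∫⁻ y in Q, ENNReal.ofReal (|u x - u y| ^ p / dist x y ^ e)) := by
        gcongr
        exact lintegral_lintegral_enorm_sub_rpow_le (measurableSet_closedCube c ℓ) hdiam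
          (by linarith) (by positivity) u
    _ = _ := by rw [← mul_assoc, inv_volume_closedCube_half_mul c hℓ (by positivity)]

/-- Let `0 < s < 1` and `1 < p < ∞`. There is `C = C(n,s,p) > 0` such that for every closed
cube `Q ⊆ ℝⁿ` with side length `ℓ(Q)` and every `u ∈ L^p(Q)`,
`∫_Q |u(x) − ⨍_{2⁻¹Q} u|^p dx ≤ C ℓ(Q)^{sp} ∫_Q ∫_Q |u(x) − u(y)|^p / |x−y|^{n+sp} dy dx`. -/
theorem fractional_poincare_on_cube (n : ℕ) (s p : ℝ)
    (hs : 0 < s) (hs1 : s < 1) (hp : 1 < p) :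
    ∃ C : ℝ, 0 < C ∧
      ∀ (c : EuclideanSpace ℝ (Fin n)) (ℓ : ℝ), 0 < ℓ →
        ∀ u : EuclideanSpace ℝ (Fin n) → ℝ,
          MemLp u (ENNReal.ofReal p) (volume.restrict (closedCube c ℓ)) →
          (∫⁻ x in closedCube c ℓ,
              ENNReal.ofReal (|u x - ⨍ y in closedCube c (ℓ / 2), u y| ^ p)) ≤
            ENNReal.ofReal (C * ℓ ^ (s * p)) *
              ∫⁻ x in closedCube c ℓ, ∫⁻ y in closedCube c ℓ,
                ENNReal.ofReal (|u x - u y| ^ p / dist x y ^ ((n : ℝ) + s * p)) :=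
  fractional_poincare_on_cube_general n s p hs hp
end

section
/- Let G ≠ ∅ be a bounded open set in ℝⁿ and let u ∈ C_c(G) be a continuous function with compact support in G. Then M_G u(x) = 0 for every x ∈ G with dist(x,∂G) ≤ dist(supp u, ∂G)/2; in particular, the support of M_G u is a compact subset of G. -/
open MeasureTheory Metric
open scoped ENNReal

/-- If `u` vanishes on every admissible ball around `x`, then `localMax G u x = 0`. -/
lemma localMax_eq_zero_of_forall {n : ℕ} (G : Set (EuclideanSpace ℝ (Fin n)))
    (u : EuclideanSpace ℝ (Fin n) → ℝ) (x : EuclideanSpace ℝ (Fin n))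
    (h : ∀ r : ℝ, 0 < r → r < Metric.infDist x (frontier G) →
      ∀ y ∈ Metric.ball x r, u y = 0) : localMax G u x = 0 := by
  have hz : ∀ r : {r : ℝ // 0 < r ∧ r < Metric.infDist x (frontier G)},
      ⨍ y in Metric.ball x (r : ℝ), |u y| = 0 := by
    intro r
    rw [setAverage_eq, setIntegral_eq_zero_of_forall_eq_zero, smul_zero]
    intro y hy
    rw [abs_eq_zero]
    exact h r r.2.1 r.2.2 y hy
  refine le_antisymm (Real.iSup_le (fun r => (hz r).le) le_rfl)
    (Real.iSup_nonneg fun r => (hz r).ge)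

/-- Let `G ≠ ∅` be a bounded open set in `ℝⁿ` and let `u ∈ C_c(G)`. Then `M_G u(x) = 0`
for every `x ∈ G` with `dist(x,∂G) ≤ dist(supp u, ∂G)/2`; in particular, the support of
`M_G u` is a compact subset of `G`.  Here `dist(supp u, ∂G)` is the infimum of
`dist(y, ∂G)` over `y ∈ supp u`. -/
theorem localMax_compact_support (n : ℕ) (G : Set (EuclideanSpace ℝ (Fin n)))
    (hG : IsOpen G) (hbdd : Bornology.IsBounded G) (hne : G.Nonempty)
    (u : EuclideanSpace ℝ (Fin n) → ℝ) (hu : Continuous u)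
    (husupp : HasCompactSupport u) (husuppG : tsupport u ⊆ G) :
    (∀ x ∈ G,
        Metric.infDist x (frontier G) ≤
          sInf ((fun y => Metric.infDist y (frontier G)) '' tsupport u) / 2 →
        localMax G u x = 0) ∧
      IsCompact (tsupport (localMax G u)) ∧ tsupport (localMax G u) ⊆ G := by
  set d : EuclideanSpace ℝ (Fin n) → ℝ := fun y => Metric.infDist y (frontier G) with hd
  set D : ℝ := sInf (d '' tsupport u) with hD
  have hbdb : BddBelow (d '' tsupport u) :=
    ⟨0, by rintro _ ⟨y, -, rfl⟩; exact infDist_nonneg⟩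
  -- Claim A : vanishing when d x ≤ D/2
  have claimA : ∀ x : EuclideanSpace ℝ (Fin n), d x ≤ D / 2 → localMax G u x = 0 := by
    intro x hx
    apply localMax_eq_zero_of_forall
    intro r hr0 hrlt y hy
    by_contra hy0
    have hyS : y ∈ tsupport u := subset_closure (by simpa using hy0)
    have hDy : D ≤ d y := csInf_le hbdb ⟨y, hyS, rfl⟩
    have hdy : d y ≤ d x + dist y x := Metric.infDist_le_infDist_add_dist
    have hxy : dist y x < r := mem_ball.1 hy
    linarith
  -- Claim B : vanishing outside the closure of G
  have claimB : ∀ x : EuclideanSpace ℝ (Fin n), x ∉ closure G → localMax G u x = 0 := by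
    intro x hx
    apply localMax_eq_zero_of_forall
    intro r hr0 hrlt y hy
    -- the ball avoids the frontier, hence avoids `closure G` entirely
    have hball_front : ∀ z ∈ Metric.ball x r, z ∉ frontier G := by
      intro z hz hzf
      exact absurd (Metric.infDist_le_dist_of_mem hzf) (not_le.2 (lt_trans (mem_ball'.1 hz) hrlt))
    have hsub : Metric.ball x r ⊆ interior (closure G) ∪ (closure G)ᶜ := by
      intro z hz
      by_cases hzc : z ∈ closure G
      · left
        by_cases hzi : z ∈ interior (closure G)
        · exact hzi
        · exact absurd (frontier_closure_subset ⟨subset_closure hzc, hzi⟩)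
            (hball_front z hz)
      · exact Or.inr hzc
    have hconn : IsPreconnected (Metric.ball x r) := (convex_ball x r).isPreconnected
    have hdisj : Disjoint (interior (closure G)) (closure G)ᶜ :=
      (disjoint_compl_right).mono_left interior_subset
    rcases hconn.subset_or_subset isOpen_interior (isClosed_closure.isOpen_compl) hdisj hsub with
      h | h
    · exact absurd (interior_subset (h (mem_ball_self hr0))) hx
    · have : y ∉ closure G := h hy
      by_contra hy0
      exact this (subset_closure (husuppG (subset_closure (by simpa using hy0))))
  refine ⟨fun x _ hx => claimA x hx, ?_⟩
  -- degenerate cases: frontier G empty or tsupport u empty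
  by_cases hFr : (frontier G).Nonempty
  · by_cases hS : (tsupport u).Nonempty
    · -- main case: D > 0
      have hDpos : 0 < D := by
        have himg : IsCompact (d '' tsupport u) :=
          (husupp.image (continuous_infDist_pt (frontier G)))
        have hmem : D ∈ d '' tsupport u :=
          himg.sInf_mem (hS.image d)
        rcases hmem with ⟨y, hyS, hyeq⟩
        rw [← hyeq]
        exact (isClosed_frontier.notMem_iff_infDist_pos hFr).1
          (fun hyf => (hG.inter_frontier_eq ▸ Set.mem_inter (husuppG hyS) hyf : (y : _) ∈ (∅ : Set _)))
      set K : Set (EuclideanSpace ℝ (Fin n)) := closure G ∩ {x | D / 2 ≤ d x} with hK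
      have hKclosed : IsClosed K :=
        isClosed_closure.inter (isClosed_le continuous_const (continuous_infDist_pt (frontier G)))
      have hKG : K ⊆ G := by
        rintro x ⟨hxc, hxd⟩
        by_contra hxG
        have hxf : x ∈ frontier G := ⟨hxc, fun h => hxG (interior_subset h)⟩
        have h0 : d x = 0 := Metric.infDist_zero_of_mem hxf
        have : D / 2 ≤ d x := hxd
        rw [h0] at this
        linarith
      have hsupp : tsupport (localMax G u) ⊆ K := by
        apply closure_minimal _ hKclosed
        intro x hx
        by_contra hxK
        by_cases hxc : x ∈ closure G
        · have hxd : d x ≤ D / 2 := le_of_lt (not_le.1 fun h => hxK ⟨hxc, h⟩)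
          exact hx (claimA x hxd)
        · exact hx (claimB x hxc)
      have hKcompact : IsCompact K :=
        Metric.isCompact_of_isClosed_isBounded hKclosed
          ((hbdd.closure).subset (Set.inter_subset_left))
      exact ⟨hKcompact.of_isClosed_subset (isClosed_tsupport _) hsupp, hsupp.trans hKG⟩
    · -- u ≡ 0
      have hu0 : ∀ x, localMax G u x = 0 := by
        intro x
        apply localMax_eq_zero_of_forall
        intro r _ _ y _
        by_contra h
        exact hS ⟨y, subset_closure (by simpa using h)⟩
      have : tsupport (localMax G u) = ∅ := by
        rw [tsupport, Function.support_eq_empty_iff.2 (funext hu0), closure_empty]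
      rw [this]
      exact ⟨isCompact_empty, Set.empty_subset _⟩
  · -- frontier empty : infDist ≡ 0, no admissible radii
    have hu0 : ∀ x, localMax G u x = 0 := by
      intro x
      apply localMax_eq_zero_of_forall
      intro r hr0 hrlt
      rw [Set.not_nonempty_iff_eq_empty.1 hFr, Metric.infDist_empty] at hrlt
      linarith
    have : tsupport (localMax G u) = ∅ := by
      rw [tsupport, Function.support_eq_empty_iff.2 (funext hu0), closure_empty]
    rw [this]
    exact ⟨isCompact_empty, Set.empty_subset _⟩
end
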